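/- arXiv:2306.07139 — 8 statements merged into one kernel-verified Lean document; each statement's English description precedes it below -/
import Mathlib

section
/- In a directed network whose arcs all have cost at most γ̄ ≥ 0, if the state x is admissible, all nodes have nonnegative state, there is a distinguished sink node t with x_t = 0, and every node has a directed path to t, then the total number of tokens V(x) = Σ_i x_i satisfies V(x) ≤ γ̄·|N|·(|N|−1)/2. -/
def arcCost {V : Type*} (γ : V → V → ℤ) (p : List V) : ℤ :=
  ((p.zip p.tail).map fun q => γ q.1 q.2).sum

def IsWalk {V : Type*} (A : V → V → Prop) (i j : V) (p : List V) : Prop :=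
  p.Chain' A ∧ p.head? = some i ∧ p.getLast? = some j

def IsPath {V : Type*} (A : V → V → Prop) (i j : V) (p : List V) : Prop :=
  IsWalk A i j p ∧ p.Nodup

/-- A directed circuit: a walk of at least one arc whose first and last nodes coincide. -/
def IsCircuit {V : Type*} (A : V → V → Prop) (p : List V) : Prop :=
  p.Chain' A ∧ 2 ≤ p.length ∧ p.head? = p.getLast?

/-!
Every arc raises the state by at most `γbar`, so along a path `i = v₁, …, v_m = t` the state of
`v_k` is at most `γbar (m - k)`. Take `i` of maximal state: the `m` path nodes together carry at
most `γbar m(m-1)/2` tokens, and each of the other `n - m` nodes at most `x i ≤ γbar (m-1)`.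
The resulting bound falls short of `γbar n(n-1)/2` by `γbar (n-m)(n-m+1)/2 ≥ 0`.
-/

open Finset

section Walk

variable {V : Type*} {A : V → V → Prop}

theorem isWalk_singleton_iff {i j a : V} : IsWalk A i j [a] ↔ a = i ∧ a = j := by
  simp [IsWalk, List.Chain', eq_comm]

theorem isWalk_cons_cons_iff {i j a b : V} {p : List V} :
    IsWalk A i j (a :: b :: p) ↔ a = i ∧ A a b ∧ IsWalk A b j (b :: p) := by
  simp only [IsWalk, List.Chain', List.isChain_cons_cons, List.head?_cons, List.getLast?_cons_cons,
    Option.some.injEq, eq_comm (a := a)]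
  tauto

variable {x : V → ℤ} {c : ℤ}

theorem IsWalk.apply_le (hstep : ∀ a b, A a b → x a ≤ x b + c) :
    ∀ {i j : V} {p : List V}, IsWalk A i j p → x i ≤ x j + c * ((p.length : ℤ) - 1)
  | _, _, [], hp => by simp [IsWalk] at hp
  | _, _, [_], hp => by
    obtain ⟨rfl, rfl⟩ := isWalk_singleton_iff.1 hp
    simp
  | _, _, _ :: b :: p, hp => by
    obtain ⟨rfl, hab, hrest⟩ := isWalk_cons_cons_iff.1 hp
    have := hrest.apply_le hstep
    have := hstep _ _ hab
    simp only [List.length_cons, Nat.cast_add, Nat.cast_one] at *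
    linarith

theorem IsWalk.two_mul_sum_le (hstep : ∀ a b, A a b → x a ≤ x b + c) :
    ∀ {i j : V} {p : List V}, IsWalk A i j p →
      2 * (p.map x).sum ≤ p.length * (2 * x j + c * ((p.length : ℤ) - 1))
  | _, _, [], hp => by simp [IsWalk] at hp
  | _, _, [_], hp => by
    obtain ⟨rfl, rfl⟩ := isWalk_singleton_iff.1 hp
    simp
  | _, _, a :: b :: p, hp => by
    have hhead := hp.apply_le hstep
    obtain ⟨rfl, -, hrest⟩ := isWalk_cons_cons_iff.1 hp
    have := hrest.two_mul_sum_le hstep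
    simp only [List.map_cons, List.sum_cons, List.length_cons, Nat.cast_add, Nat.cast_one]
      at *
    linear_combination 2 * hhead + this

end Walk

theorem two_mul_sum_le_of_le_on_compl {V : Type*} [Fintype V] [DecidableEq V] {x : V → ℤ}
    {c : ℤ} (hc : 0 ≤ c) (s : Finset V) (hs : 2 * ∑ i ∈ s, x i ≤ #s * (c * ((#s : ℤ) - 1)))
    (hcompl : ∀ i ∉ s, x i ≤ c * ((#s : ℤ) - 1)) :
    2 * ∑ i, x i ≤ c * Fintype.card V * ((Fintype.card V : ℤ) - 1) := by
  have hout : ∑ i ∈ sᶜ, x i ≤ #sᶜ • (c * ((#s : ℤ) - 1)) :=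
    sum_le_card_nsmul _ _ _ fun i hi => hcompl i (mem_compl.1 hi)
  have hcard : (#sᶜ : ℤ) = Fintype.card V - #s := by
    rw [card_compl, Nat.cast_sub (card_le_univ s)]
  rw [nsmul_eq_mul, hcard] at hout
  rw [← sum_add_sum_compl s x]
  have hgap : 0 ≤ c * ((Fintype.card V - #s) * (Fintype.card V - #s + 1)) := by
    have : (#s : ℤ) ≤ Fintype.card V := by exact_mod_cast card_le_univ s
    positivity
  linear_combination hs + 2 * hout + hgap

theorem total_tokens_bounded_general {V : Type*} [Fintype V] (A : V → V → Prop)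
    (γ : V → V → ℤ) (γbar : ℤ) (x : V → ℤ) (t : V)
    (hγbar : 0 ≤ γbar)
    (hbound : ∀ i j, A i j → γ i j ≤ γbar)
    (hadm : ∀ i j, A i j → x i - x j ≤ γ i j)
    (hsink : x t = 0)
    (hreach : ∀ i, ∃ p, IsPath A i t p) :
    ∑ i, x i ≤ γbar * (Fintype.card V : ℤ) * ((Fintype.card V : ℤ) - 1) / 2 := by
  classical
  have hstep : ∀ a b, A a b → x a ≤ x b + γbar := fun a b hab => by
    linarith [hadm a b hab, hbound a b hab]
  obtain ⟨imax, -, hmax⟩ := exists_max_image univ x ⟨t, mem_univ t⟩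
  obtain ⟨p, hwalk, hnodup⟩ := hreach imax
  have hcard : #p.toFinset = p.length := List.toFinset_card_of_nodup hnodup
  rw [Int.le_ediv_iff_mul_le two_pos, mul_comm]
  refine two_mul_sum_le_of_le_on_compl hγbar p.toFinset ?_ fun i _ => ?_
  · simpa [hcard, List.sum_toFinset x hnodup, hsink] using hwalk.two_mul_sum_le hstep
  · simpa [hcard, hsink] using (hmax i (mem_univ i)).trans (hwalk.apply_le hstep)

/-- boundedness of admissible states.  If all arc costs are at most
`γbar ≥ 0`, the state is admissible, nonnegative, zero at the sink `t`, and every node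
has a directed path to `t`, then the total number of tokens is at most
`γbar·|N|·(|N|−1)/2`. -/
theorem total_tokens_bounded {V : Type*} [Fintype V] (A : V → V → Prop)
    (γ : V → V → ℤ) (γbar : ℤ) (x : V → ℤ) (t : V)
    (hγbar : 0 ≤ γbar)
    (hbound : ∀ i j, A i j → γ i j ≤ γbar)
    (hadm : ∀ i j, A i j → x i - x j ≤ γ i j)
    (hpos : ∀ i, 0 ≤ x i)
    (hsink : x t = 0)
    (hreach : ∀ i, ∃ p, IsPath A i t p) :
    ∑ i, x i ≤ γbar * (Fintype.card V : ℤ) * ((Fintype.card V : ℤ) - 1) / 2 :=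
  total_tokens_bounded_general A γ γbar x t hγbar hbound hadm hsink hreach
end

section
/- Let G be a directed network with integer arc costs and no non-positive circuits, and suppose the state x is admissible. If a token is injected at a node i and moves along arcs according to the threshold rule (each elementary transition along (i,j) requires x_i + 1 - x_j > γ_{ij} where x_i counts the token), stopping when no transition is permitted, then after the token stops at some node j the resulting state x + e_j is again admissible. -/
/-- if a token injected at `i` walks along threshold-permitted arcs
(each transition along `(a,b)` requires `x a + 1 - x b > γ a b`, i.e. `x a - x b ≥ γ a b`)
and stops at a node `j` where no transition is permitted, then the resulting state
`x + e_j` is again admissible. -/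
theorem state_after_stop_admissible {V : Type*} [DecidableEq V] (A : V → V → Prop)
    (γ : V → V → ℤ) (x : V → ℤ) (i j : V) (p : List V)
    (hcirc : ∀ c, IsCircuit A c → 0 < arcCost γ c)
    (hadm : ∀ a b, A a b → x a - x b ≤ γ a b)
    (hwalk : IsWalk A i j p)
    (hperm : ∀ q ∈ p.zip p.tail, γ q.1 q.2 ≤ x q.1 - x q.2)
    (hstop : ∀ l, A j l → x j + 1 - x l ≤ γ j l) :
    ∀ a b, A a b →
      (x a + if a = j then 1 else 0) - (x b + if b = j then 1 else 0) ≤ γ a b := by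
  intro a b hab
  have h1 := hadm a b hab
  by_cases ha : a = j
  · subst ha
    have h2 := hstop b hab
    split_ifs <;> linarith
  · split_ifs <;> linarith
end

section
/- Let G be a directed network with integer costs, no non-positive circuits, admissible state x, and sink nodes with zero state. If a token injected at node i travels a path p = {i = h_1, ..., h_r = j} where each successive transition is permitted by the threshold rule (with equality made strict by the moving token) and stops at j (or exits at a sink j), then L(p) = x_i - x_j; in particular, p is a shortest path from i to j, i.e., every other path p' from i to j satisfies L(p') ≥ L(p). -/
/-!
Admissibility says that `x` is a potential for the costs `γ`: every arc costs at least the drop of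
`x` along it, so by telescoping every walk from `i` to `j` costs at least `x i - x j`. A permitted
transition is one where this inequality is an equality, so the traversed path attains the bound.
-/

theorem List.sum_map_zip_tail_sub {V G : Type*} [AddCommGroup G] (x : V → G) :
    ∀ {p : List V} {i j : V}, p.head? = some i → p.getLast? = some j →
      ((p.zip p.tail).map fun q => x q.1 - x q.2).sum = x i - x j
  | [], _, _, h, _ => by simp at h
  | [a], _, _, hi, hj => by
      simp only [List.head?_cons, List.getLast?_singleton, Option.some.injEq] at hi hj
      subst hi hj
      simp
  | a :: b :: t, _, j, hi, hj => by
      simp only [List.head?_cons, Option.some.injEq] at hi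
      subst hi
      have ih := List.sum_map_zip_tail_sub x (p := b :: t) rfl (by simpa using hj)
      simp only [List.zip_cons_cons, List.tail_cons, List.map_cons, List.sum_cons] at ih ⊢
      rw [ih]
      abel

theorem List.IsChain.rel_of_mem_zip_tail {V : Type*} {R : V → V → Prop} :
    ∀ {p : List V}, p.IsChain R → ∀ q ∈ p.zip p.tail, R q.1 q.2
  | [], _, q, hq => by simp at hq
  | [_], _, q, hq => by simp at hq
  | a :: b :: t, h, q, hq => by
      rw [List.isChain_cons_cons] at h
      simp only [List.zip_cons_cons, List.tail_cons, List.mem_cons] at hq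
      rcases hq with rfl | hq
      · exact h.1
      · exact h.2.rel_of_mem_zip_tail q hq

section Potential

variable {V : Type*} {A : V → V → Prop} {γ : V → V → ℤ} {x : V → ℤ} {i j : V} {p : List V}

theorem sub_le_arcCost_of_isWalk (hadm : ∀ a b, A a b → x a - x b ≤ γ a b)
    (hp : IsWalk A i j p) : x i - x j ≤ arcCost γ p := by
  rw [← List.sum_map_zip_tail_sub x hp.2.1 hp.2.2, arcCost]
  exact List.sum_le_sum fun q hq => hadm q.1 q.2 (hp.1.rel_of_mem_zip_tail q hq)

theorem arcCost_le_sub_of_tight (hi : p.head? = some i) (hj : p.getLast? = some j)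
    (htight : ∀ q ∈ p.zip p.tail, γ q.1 q.2 ≤ x q.1 - x q.2) : arcCost γ p ≤ x i - x j := by
  rw [← List.sum_map_zip_tail_sub x hi hj, arcCost]
  exact List.sum_le_sum htight

end Potential

theorem traversed_path_is_shortest_general {V : Type*} (A : V → V → Prop) (γ : V → V → ℤ)
    (x : V → ℤ) (i j : V) (p : List V)
    (hadm : ∀ a b, A a b → x a - x b ≤ γ a b)
    (hpath : IsPath A i j p)
    (hperm : ∀ q ∈ p.zip p.tail, γ q.1 q.2 ≤ x q.1 - x q.2) :
    arcCost γ p = x i - x j ∧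
      ∀ p', IsPath A i j p' → arcCost γ p ≤ arcCost γ p' := by
  have hcost : arcCost γ p = x i - x j :=
    le_antisymm (arcCost_le_sub_of_tight hpath.1.2.1 hpath.1.2.2 hperm)
      (sub_le_arcCost_of_isWalk hadm hpath.1)
  exact ⟨hcost, fun p' hp' => hcost ▸ sub_le_arcCost_of_isWalk hadm hp'.1⟩

/-- if the admissible state `x` permits a token injected at `i` to traverse
the path `p` to its destination `j` (each transition permitted by the threshold rule),
then `L(p) = x i - x j` and `p` is a shortest path from `i` to `j`. -/
theorem traversed_path_is_shortest {V : Type*} (A : V → V → Prop) (γ : V → V → ℤ)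
    (x : V → ℤ) (i j : V) (p : List V)
    (hcirc : ∀ c, IsCircuit A c → 0 < arcCost γ c)
    (hadm : ∀ a b, A a b → x a - x b ≤ γ a b)
    (hpath : IsPath A i j p)
    (hperm : ∀ q ∈ p.zip p.tail, γ q.1 q.2 ≤ x q.1 - x q.2) :
    arcCost γ p = x i - x j ∧
      ∀ p', IsPath A i j p' → arcCost γ p ≤ arcCost γ p' :=
  traversed_path_is_shortest_general A γ x i j p hadm hpath hperm
end

section
/- Let G have admissible state x with x_j = 0 for all sinks j. If an injected token at node i reaches a sink t along a threshold-permitted path p, then t is a closest sink to i: there is no sink t' and path p' from i to t' with L(p') < L(p). Moreover x_i = L(p). -/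
/-!
Along every arc admissibility gives `x a - x b ≤ γ a b`, and on a threshold-permitted arc the
reverse inequality holds. Summing along a walk, the potential differences telescope, so every
walk from `i` to a sink costs at least `x i`, while the threshold-permitted path costs exactly
`x i`.
-/

namespace List

variable {α : Type*}

theorem sum_map_sub_zip_tail {G : Type*} [AddCommGroup G] (x : α → G) :
    ∀ {l : List α} {a b : α}, l.head? = some a → l.getLast? = some b →
      ((l.zip l.tail).map fun q => x q.1 - x q.2).sum = x a - x b
  | [], _, _, ha, _ => by simp at ha
  | [c], _, _, ha, hb => by simp_all
  | c :: d :: l, a, b, ha, hb => by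
    obtain rfl : c = a := by simpa using ha
    have ih := sum_map_sub_zip_tail x (l := d :: l) rfl (by simpa using hb)
    simp only [zip_cons_cons, tail_cons, map_cons, sum_cons] at ih ⊢
    rw [ih, sub_add_sub_cancel]

theorem IsChain.rel_of_mem_zip_tail_s5 {R : α → α → Prop} :
    ∀ {l : List α}, l.IsChain R → ∀ q ∈ l.zip l.tail, R q.1 q.2
  | [], _, _, hq => by simp at hq
  | [_], _, _, hq => by simp at hq
  | _ :: _ :: _, hl, q, hq => by
    rw [isChain_cons_cons] at hl
    rw [tail_cons, zip_cons_cons, mem_cons] at hq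
    rcases hq with rfl | hq
    · exact hl.1
    · exact hl.2.rel_of_mem_zip_tail_s5 q hq

end List

section Potentials

variable {V : Type*} {A : V → V → Prop} {γ : V → V → ℤ} {x : V → ℤ} {i j : V} {p : List V}

theorem arcCost_le_sub_of_forall_mem_zip_tail
    (htight : ∀ q ∈ p.zip p.tail, γ q.1 q.2 ≤ x q.1 - x q.2)
    (hi : p.head? = some i) (hj : p.getLast? = some j) : arcCost γ p ≤ x i - x j := by
  rw [← List.sum_map_sub_zip_tail x hi hj]
  exact List.sum_le_sum htight

end Potentials

theorem reached_sink_is_closest_general {V : Type*} (A : V → V → Prop) (γ : V → V → ℤ)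
    (x : V → ℤ) (T : Set V) (i t : V) (p : List V)
    (hadm : ∀ a b, A a b → x a - x b ≤ γ a b)
    (hsinks : ∀ s ∈ T, x s = 0)
    (ht : t ∈ T)
    (hpath : IsPath A i t p)
    (hperm : ∀ q ∈ p.zip p.tail, γ q.1 q.2 ≤ x q.1 - x q.2) :
    x i = arcCost γ p ∧
      ∀ t' ∈ T, ∀ p', IsPath A i t' p' → ¬ arcCost γ p' < arcCost γ p := by
  obtain ⟨hwalk, -⟩ := hpath
  have hxi : x i = arcCost γ p := by
    have hge := sub_le_arcCost_of_isWalk hadm hwalk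
    have hle := arcCost_le_sub_of_forall_mem_zip_tail hperm hwalk.2.1 hwalk.2.2
    rw [hsinks t ht, sub_zero] at hge hle
    exact le_antisymm hge hle
  refine ⟨hxi, fun t' ht' p' hp' => not_lt.2 ?_⟩
  have hge' := sub_le_arcCost_of_isWalk hadm hp'.1
  rwa [hsinks t' ht', sub_zero, hxi] at hge'

/-- if an injected token at `i` reaches a sink `t` along a
threshold-permitted path `p`, then `t` is a closest sink to `i` (no path to any sink is
strictly shorter than `p`), and moreover `x i = L(p)`. -/
theorem reached_sink_is_closest {V : Type*} (A : V → V → Prop) (γ : V → V → ℤ)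
    (x : V → ℤ) (T : Set V) (i t : V) (p : List V)
    (hcirc : ∀ c, IsCircuit A c → 0 < arcCost γ c)
    (hadm : ∀ a b, A a b → x a - x b ≤ γ a b)
    (hsinks : ∀ s ∈ T, x s = 0)
    (ht : t ∈ T)
    (hpath : IsPath A i t p)
    (hperm : ∀ q ∈ p.zip p.tail, γ q.1 q.2 ≤ x q.1 - x q.2) :
    x i = arcCost γ p ∧
      ∀ t' ∈ T, ∀ p', IsPath A i t' p' → ¬ arcCost γ p' < arcCost γ p :=
  reached_sink_is_closest_general A γ x T i t p hadm hsinks ht hpath hperm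
end

section
/- For a single-source network with admissible nonnegative initial state x(0), the number of tokens that must be injected before the system reaches a global rest state is at most γ̄·|N|·(|N|−1)/2 − V(x(0)), where γ̄ bounds the arc costs and V(x(0)) is the initial total token count. -/
open Finset

theorem exists_arc_entering {V : Type*} {A : V → V → Prop} {S : V → Prop} {i t : V} {p : List V}
    (hp : IsWalk A i t p) (hi : ¬ S i) (ht : S t) : ∃ a b, A a b ∧ ¬ S a ∧ S b := by
  obtain ⟨hchain, hhead, hlast⟩ := hp
  induction p generalizing i with
  | nil => simp at hhead
  | cons v rest ih =>
    obtain rfl : v = i := by simpa using hhead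
    cases rest with
    | nil =>
      obtain rfl : v = t := by simpa using hlast
      exact absurd ht hi
    | cons w rest =>
      obtain ⟨hvw, hchain⟩ := List.isChain_cons_cons.1 hchain
      by_cases hw : S w
      · exact ⟨v, w, hvw, hi, hw⟩
      · exact ih hw hchain rfl (by simpa using hlast)

section Potential

variable {V : Type*} [Fintype V]

theorem le_mul_card_lt_of_forall_walk {A : V → V → Prop} {T : Set V} {f : V → ℤ} {c : ℤ}
    (hc : 0 ≤ c) (hdrop : ∀ a b, A a b → f a - f b ≤ c) (hsink : ∀ t ∈ T, f t ≤ 0)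
    (hreach : ∀ i, ∃ t ∈ T, ∃ p, IsWalk A i t p) (i : V) :
    f i ≤ c * #{j | f j < f i} := by
  induction hn : #{j | f j < f i} using Nat.strong_induction_on generalizing i with
  | _ n ih =>
    obtain ⟨t, htT, p, hp⟩ := hreach i
    by_cases hti : f t < f i
    · obtain ⟨a, b, hab, hai, hbi⟩ :=
        exists_arc_entering (S := fun j => f j < f i) hp (lt_irrefl _) hti
      have hsub : (univ.filter fun j => f j < f b) ⊂ univ.filter fun j => f j < f i := by
        refine ssubset_iff_of_subset (fun j hj => ?_) |>.2 ⟨b, by simpa using hbi, by simp⟩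
        simp only [mem_filter, mem_univ, true_and] at hj ⊢
        exact hj.trans hbi
      have hcard := card_lt_card hsub
      have hb := ih _ (hn ▸ hcard) b rfl
      have hcount : c * #{j | f j < f b} + c ≤ c * n := by
        rw [← mul_add_one]
        exact mul_le_mul_of_nonneg_left (by exact_mod_cast hn ▸ hcard) hc
      linarith [hdrop a b hab, not_lt.1 hai]
    · linarith [hsink t htT, not_lt.1 hti, mul_nonneg hc (Nat.cast_nonneg (α := ℤ) n)]

theorem two_mul_sum_card_lt_le {α : Type*} [LinearOrder α] (f : V → α) :
    2 * ∑ i, #{j | f j < f i} ≤ Fintype.card V * (Fintype.card V - 1) := by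
  classical
  have hpair : ∀ i, #{j | f j < f i} + #{j | f i < f j} ≤ Fintype.card V - 1 := fun i => by
    rw [← card_union_of_disjoint (disjoint_filter.2 fun j _ h h' => lt_asymm h h'), ← card_univ,
      ← card_erase_of_mem (mem_univ i)]
    refine card_le_card fun j hj => ?_
    simp only [mem_union, mem_filter, mem_univ, true_and] at hj
    exact mem_erase.2 ⟨by rintro rfl; simp at hj, mem_univ j⟩
  calc 2 * ∑ i, #{j | f j < f i}
      = ∑ i, (#{j | f j < f i} + #{j | f i < f j}) := by
        simp only [card_filter, sum_add_distrib, two_mul]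
        rw [sum_comm (f := fun i j => if f i < f j then 1 else 0)]
    _ ≤ ∑ _i : V, (Fintype.card V - 1) := sum_le_sum fun i _ => hpair i
    _ = Fintype.card V * (Fintype.card V - 1) := by simp

theorem sum_le_of_admissible {A : V → V → Prop} {T : Set V} {f : V → ℤ} {c : ℤ}
    (hc : 0 ≤ c) (hdrop : ∀ a b, A a b → f a - f b ≤ c) (hsink : ∀ t ∈ T, f t ≤ 0)
    (hreach : ∀ i, ∃ t ∈ T, ∃ p, IsWalk A i t p) :
    ∑ i, f i ≤ c * Fintype.card V * (Fintype.card V - 1) / 2 := by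
  rw [Int.le_ediv_iff_mul_le two_pos]
  have hpotential : ∑ i, f i ≤ c * ∑ i, (#{j | f j < f i} : ℤ) := by
    rw [mul_sum]
    exact sum_le_sum fun i _ => le_mul_card_lt_of_forall_walk hc hdrop hsink hreach i
  have hcount : 2 * ∑ i, (#{j | f j < f i} : ℤ) ≤ Fintype.card V * (Fintype.card V - 1) := by
    rcases Nat.eq_zero_or_pos (Fintype.card V) with h | h
    · simp [Fintype.card_eq_zero_iff.1 h]
    · rw [← Nat.cast_pred h]
      exact_mod_cast two_mul_sum_card_lt_le f
  linarith [mul_le_mul_of_nonneg_left hcount hc]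

end Potential

section Dynamics

variable {α : Type*} {x : ℕ → α} {Φ : α → ℤ}

theorem potential_eq_add_of_forall_ne
    (hstep : ∀ k, x (k + 1) = x k ∨ Φ (x (k + 1)) = Φ (x k) + 1) :
    ∀ k, (∀ m < k, x (m + 1) ≠ x m) → Φ (x k) = Φ (x 0) + k
  | 0, _ => by simp
  | k + 1, hne => by
    have ih := potential_eq_add_of_forall_ne hstep k fun m hm => hne m (hm.trans k.lt_succ_self)
    rcases hstep k with h | h
    · exact absurd h (hne k k.lt_succ_self)
    · rw [h, ih]; push_cast; ring

theorem exists_eventually_const_of_potential_le (B : ℤ) (hbound : ∀ k, Φ (x k) ≤ B)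
    (hstep : ∀ k, x (k + 1) = x k ∨ Φ (x (k + 1)) = Φ (x k) + 1)
    (hrest : ∀ k, x (k + 1) = x k → ∀ k', k ≤ k' → x k' = x k) :
    ∃ K : ℕ, (K : ℤ) ≤ B - Φ (x 0) ∧ ∀ k, K ≤ k → x k = x K := by
  set K := (B - Φ (x 0)).toNat
  have hK : (K : ℤ) = B - Φ (x 0) := Int.toNat_of_nonneg (by linarith [hbound 0])
  have hKrest : x (K + 1) = x K := by
    by_contra hne
    have hmove : ∀ m < K + 1, x (m + 1) ≠ x m := fun m hm hm' => hne <| by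
      rw [hrest m hm' (K + 1) (by omega), hrest m hm' K (by omega)]
    have := potential_eq_add_of_forall_ne hstep (K + 1) hmove
    push_cast at this
    linarith [hbound (K + 1)]
  exact ⟨K, hK.le, hrest K hKrest⟩

end Dynamics

theorem tokens_until_rest_state_general {V : Type*} [Fintype V] [DecidableEq V]
    (A : V → V → Prop) (γ : V → V → ℤ) (γbar : ℤ) (T : Set V)
    (x : ℕ → V → ℤ)
    (hγbar : 0 ≤ γbar)
    (hbound : ∀ i j, A i j → γ i j ≤ γbar)
    (hadm : ∀ k a b, A a b → x k a - x k b ≤ γ a b)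
    (hsinks : ∀ k, ∀ t ∈ T, x k t = 0)
    (hreach : ∀ i, ∃ t ∈ T, ∃ p, IsPath A i t p)
    (hstep : ∀ k, x (k + 1) = x k ∨
      ∃ j, x (k + 1) = fun v => x k v + if v = j then 1 else 0)
    (hrest : ∀ k, x (k + 1) = x k → ∀ k', k ≤ k' → x k' = x k) :
    ∃ K : ℕ, (K : ℤ) ≤ γbar * (Fintype.card V : ℤ) * ((Fintype.card V : ℤ) - 1) / 2
        - ∑ i, x 0 i ∧
      ∀ k, K ≤ k → x k = x K := by
  have hwalk : ∀ i, ∃ t ∈ T, ∃ p, IsWalk A i t p := fun i =>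
    let ⟨t, ht, p, hp⟩ := hreach i
    ⟨t, ht, p, hp.1⟩
  refine exists_eventually_const_of_potential_le (Φ := fun y : V → ℤ => ∑ i, y i) _
    (fun k => sum_le_of_admissible hγbar (fun a b hab => (hadm k a b hab).trans (hbound a b hab))
      (fun t ht => (hsinks k t ht).le) hwalk) (fun k => ?_) hrest
  rcases hstep k with h | ⟨j, h⟩
  · exact .inl h
  · right
    simp only [h, sum_add_distrib, sum_ite_eq', mem_univ, if_true]

/-- in a single-source network with admissible nonnegative initial state,
the number of tokens to be injected before a global rest state is reached is at most
`γbar·|N|·(|N|−1)/2 − V(x 0)`.  Each injection either leaves the state unchanged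
(the token exits at a sink) or adds one token at some node; once the state is left
unchanged it remains so forever (global rest state). -/
theorem tokens_until_rest_state {V : Type*} [Fintype V] [DecidableEq V]
    (A : V → V → Prop) (γ : V → V → ℤ) (γbar : ℤ) (T : Set V) (s : V)
    (x : ℕ → V → ℤ)
    (hγbar : 0 ≤ γbar)
    (hbound : ∀ i j, A i j → γ i j ≤ γbar)
    (hcirc : ∀ c, IsCircuit A c → 0 < arcCost γ c)
    (hadm : ∀ k a b, A a b → x k a - x k b ≤ γ a b)
    (hpos : ∀ k i, 0 ≤ x k i)
    (hsinks : ∀ k, ∀ t ∈ T, x k t = 0)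
    (hreach : ∀ i, ∃ t ∈ T, ∃ p, IsPath A i t p)
    (hstep : ∀ k, x (k + 1) = x k ∨
      ∃ j, x (k + 1) = fun v => x k v + if v = j then 1 else 0)
    (hrest : ∀ k, x (k + 1) = x k → ∀ k', k ≤ k' → x k' = x k) :
    ∃ K : ℕ, (K : ℤ) ≤ γbar * (Fintype.card V : ℤ) * ((Fintype.card V : ℤ) - 1) / 2
        - ∑ i, x 0 i ∧
      ∀ k, K ≤ k → x k = x K :=
  tokens_until_rest_state_general A γ γbar T x hγbar hbound hadm hsinks hreach hstep hrest
end

section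
/- In the expanded network G_E, every directed circuit φ_E projects to a directed circuit φ in G with secondary cost C(φ) = 0 and the same primary length L(φ_E) = L(φ). Consequently, if every circuit in G with C(φ) = 0 has L(φ) > 0, then every circuit in G_E has positive length. -/
/-- Arcs of the expanded network `G_E`: node `(i,c)` (node `i` at secondary-cost level
`c`, `0 ≤ c`) is joined to `(j, c + σ i j)` whenever `(i,j)` is an arc of `G` and the
budget `Cmax` is not exceeded. -/
def ArcE {V : Type*} (A : V → V → Prop) (σ : V → V → ℤ) (Cmax : ℤ) :
    V × ℤ → V × ℤ → Prop :=
  fun a b => A a.1 b.1 ∧ 0 ≤ a.2 ∧ b.2 = a.2 + σ a.1 b.1 ∧ b.2 ≤ Cmax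

/-- Primary costs on the expanded network: an expanded arc inherits the cost of the
underlying arc. -/
def γE {V : Type*} (γ : V → V → ℤ) : V × ℤ → V × ℤ → ℤ :=
  fun a b => γ a.1 b.1

/-!
The level coordinate of `G_E` is a potential for the secondary costs: along an arc
`(i, c) → (j, c')` of `G_E` we have `σ i j = c' - c`. Hence the secondary cost of a projected walk
telescopes to the difference of the end levels, which vanishes on a circuit. Primary costs are
read off the projection arc by arc.
-/

section ArcCost

variable {V W : Type*}

@[simp]
lemma arcCost_singleton (c : V → V → ℤ) (x : V) : arcCost c [x] = 0 := by
  simp [arcCost]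

@[simp]
lemma arcCost_cons_cons (c : V → V → ℤ) (x y : V) (l : List V) :
    arcCost c (x :: y :: l) = c x y + arcCost c (y :: l) := by
  simp [arcCost]

lemma arcCost_map (c : V → V → ℤ) (f : W → V) (p : List W) :
    arcCost c (p.map f) = arcCost (fun a b => c (f a) (f b)) p := by
  induction p with
  | nil => rfl
  | cons x l ih =>
    cases l with
    | nil => simp
    | cons y t => simp only [List.map_cons, arcCost_cons_cons] at ih ⊢; rw [ih]

lemma arcCost_eq_sub_of_chain {R : V → V → Prop} {c : V → V → ℤ} (φ : V → ℤ)
    (hc : ∀ a b, R a b → c a b = φ b - φ a) :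
    ∀ {p : List V} {a b : V}, p.IsChain R → p.head? = some a → p.getLast? = some b →
      arcCost c p = φ b - φ a
  | [], _, _, _, ha, _ => by simp at ha
  | [x], a, b, _, ha, hb => by simp at ha hb; simp [← ha, ← hb]
  | x :: y :: t, a, b, hp, ha, hb => by
    rw [List.isChain_cons_cons] at hp
    rw [List.getLast?_cons_cons] at hb
    obtain rfl : x = a := by simpa using ha
    rw [arcCost_cons_cons, hc x y hp.1, arcCost_eq_sub_of_chain φ hc hp.2 rfl hb]
    ring

lemma IsCircuit.arcCost_eq_zero {R : V → V → Prop} {c : V → V → ℤ} (φ : V → ℤ)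
    (hc : ∀ a b, R a b → c a b = φ b - φ a) {p : List V} (hp : IsCircuit R p) :
    arcCost c p = 0 := by
  obtain ⟨hchain, hlen, hcyc⟩ := hp
  obtain ⟨a, ha⟩ : ∃ a, p.head? = some a :=
    Option.isSome_iff_exists.mp (List.isSome_head?.mpr (List.ne_nil_of_length_pos (by omega)))
  rw [arcCost_eq_sub_of_chain φ hc hchain ha (hcyc ▸ ha), sub_self]

lemma IsCircuit.map {R : W → W → Prop} {S : V → V → Prop} {f : W → V}
    (hf : ∀ a b, R a b → S (f a) (f b)) {p : List W} (hp : IsCircuit R p) :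
    IsCircuit S (p.map f) := by
  obtain ⟨hchain, hlen, hcyc⟩ := hp
  refine ⟨(List.isChain_map f).mpr (hchain.imp hf), by simpa using hlen, ?_⟩
  rw [List.head?_map, List.getLast?_map, hcyc]

end ArcCost

theorem expanded_circuits_positive_general {V : Type*} (A : V → V → Prop)
    (γ σ : V → V → ℤ) (Cmax : ℤ) :
    (∀ pE, IsCircuit (ArcE A σ Cmax) pE →
        IsCircuit A (pE.map Prod.fst) ∧
        arcCost σ (pE.map Prod.fst) = 0 ∧
        arcCost (γE γ) pE = arcCost γ (pE.map Prod.fst)) ∧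
      ((∀ p, IsCircuit A p → arcCost σ p = 0 → 0 < arcCost γ p) →
        ∀ pE, IsCircuit (ArcE A σ Cmax) pE → 0 < arcCost (γE γ) pE) := by
  have projection : ∀ pE, IsCircuit (ArcE A σ Cmax) pE →
      IsCircuit A (pE.map Prod.fst) ∧
      arcCost σ (pE.map Prod.fst) = 0 ∧
      arcCost (γE γ) pE = arcCost γ (pE.map Prod.fst) := fun pE hpE =>
    ⟨hpE.map fun _ _ h => h.1,
      (arcCost_map σ Prod.fst pE).trans <|
        hpE.arcCost_eq_zero Prod.snd fun _ _ h => by rw [h.2.2.1]; ring,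
      (arcCost_map γ Prod.fst pE).symm⟩
  refine ⟨projection, fun hpos pE hpE => ?_⟩
  obtain ⟨hcirc, hσ0, hγ⟩ := projection pE hpE
  exact hγ ▸ hpos _ hcirc hσ0

/-- every circuit of `G_E` projects onto a circuit of `G` with secondary
cost zero and the same primary length; consequently, if every zero-secondary-cost
circuit of `G` has positive length, every circuit of `G_E` has positive length. -/
theorem expanded_circuits_positive {V : Type*} (A : V → V → Prop)
    (γ σ : V → V → ℤ) (Cmax : ℤ)
    (hσ : ∀ i j, A i j → 0 ≤ σ i j)
    (hcircσ : ∀ p, IsCircuit A p → 0 ≤ arcCost σ p) :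
    (∀ pE, IsCircuit (ArcE A σ Cmax) pE →
        IsCircuit A (pE.map Prod.fst) ∧
        arcCost σ (pE.map Prod.fst) = 0 ∧
        arcCost (γE γ) pE = arcCost γ (pE.map Prod.fst)) ∧
      ((∀ p, IsCircuit A p → arcCost σ p = 0 → 0 < arcCost γ p) →
        ∀ pE, IsCircuit (ArcE A σ Cmax) pE → 0 < arcCost (γE γ) pE) :=
  expanded_circuits_positive_general A γ σ Cmax
end

section
/- A directed path in the expanded network G_E from a source node i^0 to a sink copy t^c (t a sink of G, c ≤ C_max) projects to a feasible walk in G from i to t with the same primary length and secondary cost c. If additionally every circuit of G with zero secondary cost has positive primary length, then a shortest such path in G_E projects to a simple path (not a proper walk) in G. -/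
/-!
Along a walk in `G_E` the level grows by the secondary cost of each arc, so the level of a
node is the secondary cost of the projected prefix; this gives feasibility and the cost
identities. If the projection visits a node twice, at copies `x` and later `y`, cut out the
part between them and lower the levels of the rest by `y.2 - x.2 ≥ 0`: this is again a walk
of `G_E`, ending at a lower copy of the same sink, and strictly cheaper since the projected
circuit has positive primary cost. Iterating until the projection is simple yields a cheaper
path of `G_E`, contradicting minimality.
-/

theorem List.exists_eq_append_cons_append_cons_of_not_nodup_map {α β : Type*} {f : α → β}
    {l : List α} (h : ¬ (l.map f).Nodup) :
    ∃ u x v y w, l = u ++ x :: (v ++ y :: w) ∧ f x = f y := by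
  rw [List.Nodup, List.pairwise_map, List.pairwise_iff_forall_sublist] at h
  push Not at h
  obtain ⟨x, y, hxy, hf⟩ := h
  obtain ⟨r₁, r₂, rfl, hx, hy⟩ := List.cons_sublist_iff.1 hxy
  obtain ⟨u, v₁, rfl⟩ := List.append_of_mem hx
  obtain ⟨v₂, w, rfl⟩ := List.append_of_mem (List.singleton_sublist.1 hy)
  exact ⟨u, x, v₁ ++ v₂, y, w, by simp, hf⟩

section Walks

variable {V : Type*}

theorem arcCost_append_cons (γ : V → V → ℤ) (p : List V) (m : V) (q : List V) :
    arcCost γ (p ++ m :: q) = arcCost γ (p ++ [m]) + arcCost γ (m :: q) := by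
  induction p with
  | nil => simp [arcCost]
  | cons a p ih =>
    cases p with
    | nil => simp [arcCost]
    | cons b p =>
      simp only [List.cons_append, arcCost, List.tail_cons, List.zip_cons_cons, List.map_cons,
        List.sum_cons] at ih ⊢
      rw [ih]
      ring

theorem arcCost_append_cons_append_cons (γ : V → V → ℤ) (p : List V) (m : V) (q r : List V) :
    arcCost γ (p ++ m :: (q ++ m :: r)) = arcCost γ (p ++ m :: r) + arcCost γ (m :: q ++ [m]) := by
  rw [arcCost_append_cons γ p m (q ++ m :: r), arcCost_append_cons γ p m r,
    ← List.cons_append, arcCost_append_cons γ (m :: q) m r]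
  ring

theorem arcCost_γE (γ : V → V → ℤ) (l : List (V × ℤ)) :
    arcCost (γE γ) l = arcCost γ (l.map Prod.fst) := by
  simp only [arcCost, γE, ← List.map_tail, List.zip_map, List.map_map]
  rfl

variable {R : V → V → Prop} {a b m : V} {p q : List V}

theorem isWalk_iff :
    IsWalk R a b p ↔ p.IsChain R ∧ p.head? = some a ∧ p.getLast? = some b :=
  Iff.rfl

theorem isWalk_append_cons_iff :
    IsWalk R a b (p ++ m :: q) ↔ IsWalk R a m (p ++ [m]) ∧ IsWalk R m b (m :: q) := by
  have hhead : (p ++ m :: q).head? = (p ++ [m]).head? := by cases p <;> simp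
  simp only [isWalk_iff]
  rw [List.isChain_split, hhead, List.getLast?_append_cons, List.getLast?_concat,
    List.head?_cons]
  tauto

theorem IsWalk.mem_left (h : IsWalk R a b p) : a ∈ p :=
  List.mem_of_mem_head? h.2.1

theorem IsWalk.isCircuit (h : IsWalk R a a p) (hp : 2 ≤ p.length) : IsCircuit R p :=
  ⟨h.1, hp, h.2.1.trans h.2.2.symm⟩

end Walks

section ExpandedNetwork

variable {V : Type*} {A : V → V → Prop} {σ : V → V → ℤ} {Cmax : ℤ} {a b z : V × ℤ}
  {l : List (V × ℤ)}

theorem ArcE.snd_le (hσ : ∀ a b, A a b → 0 ≤ σ a b) (h : ArcE A σ Cmax a b) : a.2 ≤ b.2 := by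
  linarith [hσ _ _ h.1, h.2.2.1]

theorem IsWalk.map_fst (hl : IsWalk (ArcE A σ Cmax) a b l) :
    IsWalk A a.1 b.1 (l.map Prod.fst) := by
  rw [isWalk_iff] at hl ⊢
  refine ⟨(List.isChain_map _).2 (hl.1.imp fun _ _ h => h.1), ?_, ?_⟩ <;>
    simp [hl.2.1, hl.2.2]

theorem IsWalk.snd_eq_add_arcCost (hl : IsWalk (ArcE A σ Cmax) a b l) :
    b.2 = a.2 + arcCost σ (l.map Prod.fst) := by
  induction l generalizing a with
  | nil => simp [isWalk_iff] at hl
  | cons a' l ih =>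
    cases l with
    | nil =>
      obtain ⟨rfl, rfl⟩ : a' = a ∧ a' = b := by simpa [isWalk_iff] using hl
      simp [arcCost]
    | cons c l =>
      rw [isWalk_iff, List.isChain_cons_cons] at hl
      obtain ⟨⟨hac, hch⟩, hhead, hlast⟩ := hl
      obtain rfl : a' = a := by simpa using hhead
      rw [ih ⟨hch, rfl, by simpa using hlast⟩, hac.2.2.1]
      simp only [arcCost, List.map_cons, List.tail_cons, List.zip_cons_cons, List.sum_cons]
      ring

theorem IsWalk.snd_mem_Icc (hσ : ∀ a b, A a b → 0 ≤ σ a b) (hl : IsWalk (ArcE A σ Cmax) a b l)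
    (hz : z ∈ l) : z.2 ∈ Set.Icc a.2 b.2 := by
  have hmono : (l.map Prod.snd).Pairwise (· ≤ ·) :=
    ((List.isChain_map _).2 (hl.1.imp fun _ _ h => ArcE.snd_le hσ h)).pairwise
  obtain ⟨-, hhead, hlast⟩ := hl
  constructor
  · obtain ⟨l', rfl⟩ := List.head?_eq_some_iff.1 hhead
    rcases List.mem_cons.1 hz with rfl | hz
    · exact le_rfl
    · exact List.rel_of_pairwise_cons (by simpa using hmono) (List.mem_map_of_mem hz)
  · obtain ⟨l', rfl⟩ := List.getLast?_eq_some_iff.1 hlast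
    rcases List.mem_append.1 hz with hz | hz
    · simp only [List.map_append, List.pairwise_append] at hmono
      exact hmono.2.2 _ (List.mem_map_of_mem hz) _ (by simp)
    · simp_all

theorem IsWalk.arcCost_le_of_prefix (hσ : ∀ a b, A a b → 0 ≤ σ a b)
    (hl : IsWalk (ArcE A σ Cmax) a b l) {q : List V} (hq : q <+: l.map Prod.fst) :
    arcCost σ q ≤ b.2 - a.2 := by
  obtain ⟨p, ⟨r, rfl⟩, rfl⟩ := List.prefix_map_iff.1 hq
  rcases p.eq_nil_or_concat' with rfl | ⟨p, z, rfl⟩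
  · simpa [arcCost] using (hl.snd_mem_Icc hσ hl.mem_left).2
  · rw [List.append_assoc, List.singleton_append] at hl
    have hz := (isWalk_append_cons_iff.1 hl).1.snd_eq_add_arcCost
    have hzb := (hl.snd_mem_Icc hσ (by simp : z ∈ p ++ z :: r)).2
    linarith

theorem IsWalk.map_sub_snd (hσ : ∀ a b, A a b → 0 ≤ σ a b) (hl : IsWalk (ArcE A σ Cmax) a b l)
    {δ : ℤ} (hδ : 0 ≤ δ) (hδa : δ ≤ a.2) :
    IsWalk (ArcE A σ Cmax) (a.1, a.2 - δ) (b.1, b.2 - δ) (l.map fun z => (z.1, z.2 - δ)) := by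
  refine ⟨(List.isChain_map _).2 (hl.1.imp_of_mem_imp fun z z' hz _ h => ?_), ?_, ?_⟩
  · have := (hl.snd_mem_Icc hσ hz).1
    obtain ⟨h₁, h₂, h₃, h₄⟩ := h
    exact ⟨h₁, by simp only; omega, by simp only; omega, by simp only; omega⟩
  · simp [hl.2.1]
  · simp [hl.2.2]

theorem IsWalk.exists_cheaper_of_not_nodup_map_fst {γ : V → V → ℤ}
    (hσ : ∀ a b, A a b → 0 ≤ σ a b) (hγ : ∀ p, IsCircuit A p → 0 < arcCost γ p)
    (ha : 0 ≤ a.2) (hl : IsWalk (ArcE A σ Cmax) a b l) (hnd : ¬ (l.map Prod.fst).Nodup) :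
    ∃ c ≤ b.2, ∃ l', IsWalk (ArcE A σ Cmax) a (b.1, c) l' ∧ l'.length < l.length ∧
      arcCost (γE γ) l' < arcCost (γE γ) l := by
  obtain ⟨u, x, v, y, w, rfl, hxy⟩ :=
    List.exists_eq_append_cons_append_cons_of_not_nodup_map hnd
  obtain ⟨hux, hxb⟩ := isWalk_append_cons_iff.1 hl
  obtain ⟨hxy', hyb⟩ := isWalk_append_cons_iff (p := x :: v).1 hxb
  have hax := (hl.snd_mem_Icc hσ (z := x) (by simp)).1
  have hxy₂ := (hxy'.snd_mem_Icc hσ (z := x) (by simp)).2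
  have hyx : ((y.1, y.2 - (y.2 - x.2)) : V × ℤ) = x := Prod.ext hxy.symm (by simp)
  have hlow := hyb.map_sub_snd hσ (δ := y.2 - x.2) (by omega) (by omega)
  rw [List.map_cons, hyx] at hlow
  refine ⟨b.2 - (y.2 - x.2), by omega, _, isWalk_append_cons_iff.2 ⟨hux, hlow⟩, by simp, ?_⟩
  have hcirc : 0 < arcCost γ (x.1 :: v.map Prod.fst ++ [x.1]) :=
    hγ _ (IsWalk.isCircuit (by simpa [hxy] using hxy'.map_fst) (by simp))
  have hproj : (u ++ x :: w.map fun z => (z.1, z.2 - (y.2 - x.2))).map Prod.fst =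
      u.map Prod.fst ++ x.1 :: w.map Prod.fst := by
    simp [Function.comp_def]
  rw [arcCost_γE, arcCost_γE, hproj, List.map_append, List.map_cons, List.map_append,
    List.map_cons, ← hxy, arcCost_append_cons_append_cons]
  linarith

theorem IsWalk.exists_cheaper_path_of_not_nodup_map_fst {γ : V → V → ℤ}
    (hσ : ∀ a b, A a b → 0 ≤ σ a b) (hγ : ∀ p, IsCircuit A p → 0 < arcCost γ p)
    (ha : 0 ≤ a.2) (hl : IsWalk (ArcE A σ Cmax) a b l) (hnd : ¬ (l.map Prod.fst).Nodup) :
    ∃ c ≤ b.2, ∃ l', IsPath (ArcE A σ Cmax) a (b.1, c) l' ∧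
      arcCost (γE γ) l' < arcCost (γE γ) l := by
  induction hn : l.length using Nat.strong_induction_on generalizing l b with
  | _ n ih =>
    obtain ⟨c, hc, l', hl', hlen, hcost⟩ := hl.exists_cheaper_of_not_nodup_map_fst hσ hγ ha hnd
    by_cases hnd' : (l'.map Prod.fst).Nodup
    · exact ⟨c, hc, l', ⟨hl', hnd'.of_map _⟩, hcost⟩
    · obtain ⟨c', hc', l'', hl'', hcost'⟩ := ih _ (hn ▸ hlen) hl' hnd' rfl
      exact ⟨c', hc'.trans hc, l'', hl'', hcost'.trans hcost⟩

end ExpandedNetwork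

/-- a directed path in `G_E` from the source copy `(i,0)` to a sink copy
`(t,c)` projects onto a feasible walk in `G` from `i` to `t` with the same primary
length and secondary cost `c`; if moreover every zero-secondary-cost circuit of `G` has
positive primary length, a shortest such path projects onto a simple path of `G`. -/
theorem expanded_path_projects {V : Type*} (A : V → V → Prop)
    (γ σ : V → V → ℤ) (Cmax : ℤ) (T : Set V) (i t : V) (c : ℤ) (pE : List (V × ℤ))
    (hσ : ∀ a b, A a b → 0 ≤ σ a b)
    (hcircγ : ∀ p, IsCircuit A p → 0 < arcCost γ p)
    (ht : t ∈ T)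
    (hc : c ≤ Cmax)
    (hpE : IsPath (ArcE A σ Cmax) (i, 0) (t, c) pE) :
    (IsWalk A i t (pE.map Prod.fst) ∧
        (∀ q, q <+: pE.map Prod.fst → arcCost σ q ≤ Cmax) ∧
        arcCost (γE γ) pE = arcCost γ (pE.map Prod.fst) ∧
        arcCost σ (pE.map Prod.fst) = c) ∧
      ((∀ p, IsCircuit A p → arcCost σ p = 0 → 0 < arcCost γ p) →
        (∀ t' ∈ T, ∀ c' : ℤ, c' ≤ Cmax → ∀ qE, IsPath (ArcE A σ Cmax) (i, 0) (t', c') qE →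
          arcCost (γE γ) pE ≤ arcCost (γE γ) qE) →
        (pE.map Prod.fst).Nodup) := by
  have hw := hpE.1
  have hc₀ : (0 : ℤ) ≤ c := (hw.snd_mem_Icc hσ hw.mem_left).2
  refine ⟨⟨hw.map_fst, fun q hq => ?_, arcCost_γE γ pE, ?_⟩, fun _ hopt => ?_⟩
  · have := hw.arcCost_le_of_prefix hσ hq
    simp only [sub_zero] at this
    omega
  · simpa using hw.snd_eq_add_arcCost.symm
  · by_contra hnd
    obtain ⟨c', hc', qE, hqE, hlt⟩ :=
      hw.exists_cheaper_path_of_not_nodup_map_fst hσ hcircγ le_rfl hnd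
    exact (hopt t ht c' (hc'.trans hc) qE hqE).not_gt hlt
end

section
/- Under the threshold policy, the set of arcs simultaneously carrying a transition (u_{ij} = 1) forms a union of node-disjoint directed paths: since at most one token enters and at most one token leaves each node, and the network has no non-positive circuits, the subgraph induced by active arcs is acyclic with all in- and out-degrees at most 1. -/
section

variable {V : Type*}

theorem arcCost_cons_cons_s15 (γ : V → V → ℤ) (a b : V) (p : List V) :
    arcCost γ (a :: b :: p) = γ a b + arcCost γ (b :: p) := by
  simp [arcCost]

theorem arcCost_le_sub_of_chain (γ : V → V → ℤ) (x : V → ℤ) (p : List V) :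
    ∀ a, (a :: p).IsChain (fun a b => γ a b ≤ x a - x b) →
      arcCost γ (a :: p) ≤ x a - x ((a :: p).getLast (List.cons_ne_nil a p)) := by
  induction p with
  | nil => intro a _; simp [arcCost]
  | cons b p ih =>
    intro a hchain
    rw [List.isChain_cons_cons] at hchain
    rw [arcCost_cons_cons_s15, List.getLast_cons_cons]
    linarith [hchain.1, ih b hchain.2]

theorem arcCost_nonpos_of_isCircuit (γ : V → V → ℤ) (x : V → ℤ) {p : List V}
    (hp : IsCircuit (fun a b => γ a b ≤ x a - x b) p) : arcCost γ p ≤ 0 := by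
  obtain ⟨hchain, hlen, hends⟩ := hp
  obtain _ | ⟨a, q⟩ := p
  · simp at hlen
  · have hlast : (a :: q).getLast (List.cons_ne_nil a q) = a := by
      simpa [List.getLast?_eq_some_getLast (List.cons_ne_nil a q)] using hends.symm
    simpa [hlast] using arcCost_le_sub_of_chain γ x q a hchain

theorem eq_of_sum_le_one [Fintype V] {f : V → ℤ} (hf : ∀ k, 0 ≤ f k)
    (hsum : ∑ k, f k ≤ 1) {j j' : V} (hj : f j = 1) (hj' : f j' = 1) : j = j' := by
  classical
  by_contra hne
  have hpair : ∑ k ∈ {j, j'}, f k ≤ ∑ k, f k :=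
    Finset.sum_le_sum_of_subset_of_nonneg (Finset.subset_univ _) fun k _ _ => hf k
  rw [Finset.sum_pair hne] at hpair
  omega

end

theorem active_arcs_form_paths_general {V : Type*} [Fintype V] (A : V → V → Prop)
    (γ : V → V → ℤ) (x : V → ℤ) (u : V → V → ℤ) (ν : V → ℤ)
    (hcirc : ∀ c, IsCircuit A c → 0 < arcCost γ c)
    (hu01 : ∀ i j, u i j = 0 ∨ u i j = 1)
    (hν01 : ∀ i, ν i = 0 ∨ ν i = 1)
    (hin : ∀ i, (∑ j, u j i) + ν i ≤ 1)
    (hout : ∀ i, ∑ j, u i j ≤ 1)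
    (hthr : ∀ i j, u i j = 1 →
      A i j ∧ γ i j < x i + (∑ l, u l i) + ν i - x j) :
    (¬ ∃ p, IsCircuit (fun a b => u a b = 1) p) ∧
      (∀ i j j', u i j = 1 → u i j' = 1 → j = j') ∧
      (∀ i j j', u j i = 1 → u j' i = 1 → j = j') := by
  have hnonneg : ∀ i j, 0 ≤ u i j := fun i j => by rcases hu01 i j with h | h <;> omega
  have hinflow : ∀ i, ∑ l, u l i ≤ 1 := fun i => by
    rcases hν01 i with h | h <;> linarith [hin i]
  -- The tokens entering `i` plus `ν i` number at most one, so the threshold drops to `γ`.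
  have hactive : ∀ a b, u a b = 1 → γ a b ≤ x a - x b := fun a b h => by
    linarith [(hthr a b h).2, hin a]
  refine ⟨?_, fun i _ _ => eq_of_sum_le_one (hnonneg i) (hout i),
    fun i _ _ => eq_of_sum_le_one (fun l => hnonneg l i) (hinflow i)⟩
  rintro ⟨p, hchain, hlen, hends⟩
  have hpos := hcirc p ⟨hchain.imp fun a b h => (hthr a b h).1, hlen, hends⟩
  have hnonpos := arcCost_nonpos_of_isCircuit γ x ⟨hchain.imp hactive, hlen, hends⟩
  omega

/-- under the threshold policy, the set of simultaneously active arcs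
(`u i j = 1`) forms a union of node-disjoint directed paths: each node has in-degree
and out-degree at most one in the active subgraph, and the active subgraph contains no
directed circuit. -/
theorem active_arcs_form_paths {V : Type*} [Fintype V] (A : V → V → Prop)
    (γ : V → V → ℤ) (x : V → ℤ) (u : V → V → ℤ) (ν : V → ℤ)
    (hcirc : ∀ c, IsCircuit A c → 0 < arcCost γ c)
    (hadm : ∀ a b, A a b → x a - x b ≤ γ a b)
    (hu01 : ∀ i j, u i j = 0 ∨ u i j = 1)
    (hν01 : ∀ i, ν i = 0 ∨ ν i = 1)
    (hin : ∀ i, (∑ j, u j i) + ν i ≤ 1)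
    (hout : ∀ i, ∑ j, u i j ≤ 1)
    (hthr : ∀ i j, u i j = 1 →
      A i j ∧ γ i j < x i + (∑ l, u l i) + ν i - x j) :
    (¬ ∃ p, IsCircuit (fun a b => u a b = 1) p) ∧
      (∀ i j j', u i j = 1 → u i j' = 1 → j = j') ∧
      (∀ i j j', u j i = 1 → u j' i = 1 → j = j') :=
  active_arcs_form_paths_general A γ x u ν hcirc hu01 hν01 hin hout hthr
end
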